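/- arXiv:2509.21705 — 2 statements merged into one kernel-verified Lean document; each statement's English description precedes it below -/
import Mathlib

section
/- For m ≥ 1 define the polynomial h(m, t) = Σ_{i=0}^{m} f_{i−1}(m)·(t−1)^{m−i} in ℤ[t], where f_i(m) is the number of independent sets of G_m of cardinality i+1 and f_{−1}(m) = 1. Then for every m ≥ 3, h(m, t) = (t+1)·h(m−1, t) + t·h(m−2, t). -/
open Polynomial Finset



/-- The vertex set of the graph `Gₘ`: `Sum.inl i` is the vertex `a_{i+1}` (for `0 ≤ i < m`),
`Sum.inr (Sum.inl i)` is `b_{i+1}`, and `Sum.inr (Sum.inr j)` is `c_{j+2}`. -/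
abbrev GV (m : ℕ) := Fin m ⊕ Fin m ⊕ Fin (m - 1)

/-- The vertex `a_{i+1}` of `Gₘ`. -/
def aV {m : ℕ} (i : Fin m) : GV m := Sum.inl i
/-- The vertex `b_{i+1}` of `Gₘ`. -/
def bV {m : ℕ} (i : Fin m) : GV m := Sum.inr (Sum.inl i)
/-- The vertex `c_{j+2}` of `Gₘ`. -/
def cV {m : ℕ} (j : Fin (m - 1)) : GV m := Sum.inr (Sum.inr j)

/-- Half of the adjacency relation of `Gₘ` (the full relation is its symmetrization):
the edges `a_i a_{i+1}`, `a_i b_i`, `b_i c_{i+1}`, `b_i c_i`, `c_i a_{i+1}` (1-based indices). -/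
def adjHalf (m : ℕ) : GV m → GV m → Bool
  | Sum.inl i, Sum.inl j => decide (i.val + 1 = j.val)
  | Sum.inl i, Sum.inr (Sum.inl j) => decide (i = j)
  | Sum.inl _, Sum.inr (Sum.inr _) => false
  | Sum.inr (Sum.inl _), Sum.inl _ => false
  | Sum.inr (Sum.inl _), Sum.inr (Sum.inl _) => false
  | Sum.inr (Sum.inl i), Sum.inr (Sum.inr j) => decide (i.val = j.val ∨ i.val = j.val + 1)
  | Sum.inr (Sum.inr j), Sum.inl i => decide (i.val = j.val + 2)
  | Sum.inr (Sum.inr _), Sum.inr (Sum.inl _) => false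
  | Sum.inr (Sum.inr _), Sum.inr (Sum.inr _) => false

/-- The graph `Gₘ` from the paper (with `3m - 1` vertices). -/
def Gm (m : ℕ) : SimpleGraph (GV m) where
  Adj u v := adjHalf m u v = true ∨ adjHalf m v u = true
  symm := ⟨fun _ _ h => h.symm⟩
  loopless := ⟨by
    rintro (i | i | j) h <;> simp [adjHalf] at h⟩

instance (m : ℕ) : DecidableRel (Gm m).Adj := fun u v =>
  inferInstanceAs (Decidable (adjHalf m u v = true ∨ adjHalf m v u = true))

/-- The number of independent sets of cardinality `k` of a graph `G`;
`nIndep G (i + 1)` is the face number `fᵢ` of the independence complex of `G`. -/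
noncomputable def nIndep {V : Type*} (G : SimpleGraph V) (k : ℕ) : ℕ :=
  Nat.card {A : Finset V // A.card = k ∧ ∀ u ∈ A, ∀ v ∈ A, ¬ G.Adj u v}

/-- The polynomial `h(m, t) = ∑_{i=0}^{m} f_{i−1}(m) (t − 1)^{m−i}` attached to the
independence complex of `Gₘ` (here `f_{i−1}(m) = nIndep (Gm m) i`, and `f_{−1}(m) = 1`).
Its coefficient of `t^{m-k}` is the `h`-vector entry `h_k(m)`. -/
noncomputable def hNumPoly (m : ℕ) : Polynomial ℤ :=
  ∑ i ∈ Finset.range (m + 1),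
    Polynomial.C (nIndep (Gm m) i : ℤ) * (Polynomial.X - 1) ^ (m - i)


section Framework

variable {V : Type*} [Fintype V] [DecidableEq V]

/-- `A` is an independent set of `G`. -/
def IndepF (G : SimpleGraph V) (A : Finset V) : Prop :=
  ∀ u ∈ A, ∀ v ∈ A, ¬ G.Adj u v

instance (G : SimpleGraph V) [DecidableRel G.Adj] (A : Finset V) : Decidable (IndepF G A) := by
  unfold IndepF; infer_instance

/-- The independence polynomial of `G` restricted to subsets of `s`. -/
noncomputable def PS (G : SimpleGraph V) [DecidableRel G.Adj] (s : Finset V) : Polynomial ℤ :=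
  ∑ A ∈ s.powerset, if IndepF G A then (X : Polynomial ℤ) ^ A.card else 0

lemma PS_del (G : SimpleGraph V) [DecidableRel G.Adj] (s : Finset V) (v : V) (hv : v ∈ s) :
    PS G s = PS G (s.erase v)
      + X * PS G ((s.erase v).filter (fun u => ¬ G.Adj v u)) := by
  classical
  unfold PS
  have h0 : s = insert v (s.erase v) := (Finset.insert_erase hv).symm
  conv_lhs => rw [h0, Finset.sum_powerset_insert (Finset.notMem_erase v s)]
  congr 1
  · have key : ∀ B ∈ (s.erase v).powerset,
        (if IndepF G (insert v B) then (X : Polynomial ℤ) ^ (insert v B).card else 0)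
        = (if B ∈ ((s.erase v).filter (fun u => ¬ G.Adj v u)).powerset then
            (if IndepF G B then (X : Polynomial ℤ) * X ^ B.card else 0) else 0) := by
      intro B hB
      have hvB : v ∉ B := fun h => Finset.notMem_erase v s (Finset.mem_powerset.mp hB h)
      have hiff : IndepF G (insert v B) ↔
          (B ∈ ((s.erase v).filter (fun u => ¬ G.Adj v u)).powerset ∧ IndepF G B) := by
        constructor
        · intro h
          refine ⟨Finset.mem_powerset.mpr ?_, fun u hu w hw => h u (Finset.mem_insert_of_mem hu) w (Finset.mem_insert_of_mem hw)⟩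
          intro u hu
          exact Finset.mem_filter.mpr ⟨Finset.mem_powerset.mp hB hu,
            h v (Finset.mem_insert_self v B) u (Finset.mem_insert_of_mem hu)⟩
        · rintro ⟨hBt, hind⟩
          have hB' : ∀ u ∈ B, ¬ G.Adj v u := fun u hu =>
            (Finset.mem_filter.mp (Finset.mem_powerset.mp hBt hu)).2
          intro u hu w hw
          rcases Finset.mem_insert.mp hu with rfl | hu'
          · rcases Finset.mem_insert.mp hw with rfl | hw'
            · exact G.loopless.irrefl _
            · exact hB' w hw'
          · rcases Finset.mem_insert.mp hw with rfl | hw'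
            · exact fun h => hB' u hu' h.symm
            · exact hind u hu' w hw'
      rw [Finset.card_insert_of_notMem hvB]
      by_cases h1 : B ∈ ((s.erase v).filter (fun u => ¬ G.Adj v u)).powerset
      · by_cases h2 : IndepF G B
        · rw [if_pos (hiff.mpr ⟨h1, h2⟩), if_pos h1, if_pos h2, pow_succ, mul_comm]
        · rw [if_neg (fun h => h2 (hiff.mp h).2), if_pos h1, if_neg h2]
      · rw [if_neg (fun h => h1 (hiff.mp h).1), if_neg h1]
    rw [Finset.sum_congr rfl key, Finset.sum_ite_mem,
      Finset.inter_eq_right.mpr (Finset.powerset_mono.mpr (Finset.filter_subset _ _)),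
      Finset.mul_sum]
    exact Finset.sum_congr rfl fun B _ => by rw [mul_ite, mul_zero]

lemma PS_map {V' : Type*} [Fintype V'] [DecidableEq V']
    (G : SimpleGraph V) [DecidableRel G.Adj] (G' : SimpleGraph V') [DecidableRel G'.Adj]
    (e : V' → V) (he : Function.Injective e)
    (hadj : ∀ x y, G'.Adj x y ↔ G.Adj (e x) (e y))
    (s' : Finset V') :
    PS G (s'.image e) = PS G' s' := by
  classical
  unfold PS
  refine (Finset.sum_bij' (fun (B : Finset V') _ => B.image e)
    (fun (A : Finset V) _ => A.preimage e he.injOn) ?_ ?_ ?_ ?_ ?_).symm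
  · intro B hB
    exact Finset.mem_powerset.mpr (Finset.image_subset_image (Finset.mem_powerset.mp hB))
  · intro A hA
    refine Finset.mem_powerset.mpr ?_
    intro y hy
    have := Finset.mem_powerset.mp hA (Finset.mem_preimage.mp hy)
    rcases Finset.mem_image.mp this with ⟨z, hz, hze⟩
    exact he hze ▸ hz
  · intro B hB
    ext x
    simp only [Finset.mem_preimage, Finset.mem_image]
    exact ⟨fun ⟨y, hy, hxy⟩ => he hxy ▸ hy, fun hx => ⟨x, hx, rfl⟩⟩
  · intro A hA
    ext x
    simp only [Finset.mem_image, Finset.mem_preimage]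
    constructor
    · rintro ⟨y, hy, rfl⟩; exact hy
    · intro hx
      rcases Finset.mem_image.mp (Finset.mem_powerset.mp hA hx) with ⟨y, _, rfl⟩
      exact ⟨y, hx, rfl⟩
  · intro B hB
    have hcard : (B.image e).card = B.card := Finset.card_image_of_injective B he
    have hind : IndepF G' B ↔ IndepF G (B.image e) := by
      constructor
      · intro h u hu w hw
        rcases Finset.mem_image.mp hu with ⟨x, hx, rfl⟩
        rcases Finset.mem_image.mp hw with ⟨y, hy, rfl⟩
        exact fun hadj' => h x hx y hy ((hadj x y).mpr hadj')
      · intro h x hx y hy hadj'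
        exact h (e x) (Finset.mem_image_of_mem e hx) (e y) (Finset.mem_image_of_mem e hy)
          ((hadj x y).mp hadj')
    rw [hcard]
    by_cases h : IndepF G' B
    · rw [if_pos h, if_pos (hind.mp h)]
    · rw [if_neg h, if_neg (fun h' => h (hind.mpr h'))]

end Framework

section Counting

variable {V : Type*} [Fintype V] [DecidableEq V]

/-- The number of independent `k`-subsets, as a `Finset` cardinality. -/
def cnt (G : SimpleGraph V) [DecidableRel G.Adj] (k : ℕ) : ℕ :=
  ((Finset.univ : Finset (Finset V)).filter (fun A => A.card = k ∧ IndepF G A)).card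

lemma nIndep_eq_cnt (G : SimpleGraph V) [DecidableRel G.Adj] (k : ℕ) :
    nIndep G k = cnt G k := by
  unfold nIndep cnt IndepF
  rw [Nat.card_eq_fintype_card, Fintype.card_subtype]

lemma coeff_PS (G : SimpleGraph V) [DecidableRel G.Adj] (k : ℕ) :
    (PS G Finset.univ).coeff k = (cnt G k : ℤ) := by
  unfold PS cnt
  rw [Polynomial.finset_sum_coeff, Finset.powerset_univ]
  have key : ∀ A : Finset V, ((if IndepF G A then (X : Polynomial ℤ) ^ A.card else 0).coeff k)
      = (if A.card = k ∧ IndepF G A then (1 : ℤ) else 0) := by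
    intro A
    by_cases h : IndepF G A
    · rw [if_pos h, Polynomial.coeff_X_pow]
      by_cases h2 : A.card = k
      · rw [if_pos h2.symm, if_pos ⟨h2, h⟩]
      · rw [if_neg (fun hc => h2 hc.symm), if_neg (fun hc => h2 hc.1)]
    · rw [if_neg h, Polynomial.coeff_zero, if_neg (fun hc => h hc.2)]
  rw [Finset.sum_congr rfl fun A _ => key A, Finset.sum_boole]

lemma cnt_eq_zero (G : SimpleGraph V) [DecidableRel G.Adj] {k : ℕ}
    (h : Fintype.card V < k) : cnt G k = 0 := by
  unfold cnt
  rw [Finset.card_eq_zero, Finset.filter_eq_empty_iff]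
  rintro A - ⟨hA, -⟩
  exact absurd (hA ▸ Finset.card_le_univ A) (by omega)

lemma natDegree_PS_le_card (G : SimpleGraph V) [DecidableRel G.Adj] :
    (PS G Finset.univ).natDegree ≤ Fintype.card V := by
  rw [Polynomial.natDegree_le_iff_coeff_eq_zero]
  intro N hN
  rw [coeff_PS, cnt_eq_zero G hN, Nat.cast_zero]

end Counting

section ReflectLemmas

lemma reflect_finset_sum {ι : Type*} (N : ℕ) (s : Finset ι) (f : ι → Polynomial ℤ) :
    Polynomial.reflect N (∑ i ∈ s, f i) = ∑ i ∈ s, Polynomial.reflect N (f i) := by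
  classical
  induction s using Finset.cons_induction with
  | empty => simp [Polynomial.reflect_zero]
  | cons a s ha ih => rw [Finset.sum_cons, Finset.sum_cons, Polynomial.reflect_add, ih]

lemma reflect_eq_sum (m : ℕ) (p : Polynomial ℤ) (hp : p.natDegree ≤ m) :
    Polynomial.reflect m p = ∑ i ∈ Finset.range (m + 1), Polynomial.C (p.coeff i) * X ^ (m - i) := by
  conv_lhs => rw [Polynomial.as_sum_range' p (m + 1) (Nat.lt_succ_of_le hp)]
  rw [reflect_finset_sum]
  refine Finset.sum_congr rfl fun i hi => ?_
  rw [Finset.mem_range] at hi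
  rw [← Polynomial.C_mul_X_pow_eq_monomial, Polynomial.reflect_C_mul_X_pow,
    Polynomial.revAt_le (by omega)]

end ReflectLemmas

section GmSpecific

lemma Gm_adj (m : ℕ) (u v : GV m) :
    (Gm m).Adj u v ↔ (adjHalf m u v = true ∨ adjHalf m v u = true) := Iff.rfl

/-- Truncation predicates cutting each of the three families of vertices. -/
def FSp (m p q r : ℕ) : GV m → Prop := fun x => match x with
  | Sum.inl i => i.val < p
  | Sum.inr (Sum.inl i) => i.val < q
  | Sum.inr (Sum.inr j) => j.val < r

instance (m p q r : ℕ) : DecidablePred (FSp m p q r) := fun x => by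
  rcases x with i | i | j <;> exact Nat.decLt _ _

/-- The truncated vertex set. -/
def FS (m p q r : ℕ) : Finset (GV m) := Finset.univ.filter (FSp m p q r)

@[simp] lemma mem_FS_a (m p q r : ℕ) (i : Fin m) :
    (Sum.inl i : GV m) ∈ FS m p q r ↔ i.val < p := by
  simp [FS, FSp]

@[simp] lemma mem_FS_b (m p q r : ℕ) (i : Fin m) :
    (Sum.inr (Sum.inl i) : GV m) ∈ FS m p q r ↔ i.val < q := by
  simp [FS, FSp]

@[simp] lemma mem_FS_c (m p q r : ℕ) (j : Fin (m - 1)) :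
    (Sum.inr (Sum.inr j) : GV m) ∈ FS m p q r ↔ j.val < r := by
  simp [FS, FSp]

/-- Embedding of the smaller vertex set into the bigger one. -/
def embG (m n : ℕ) (h : n ≤ m) (h' : n - 1 ≤ m - 1) : GV n → GV m :=
  Sum.map (Fin.castLE h) (Sum.map (Fin.castLE h) (Fin.castLE h'))

lemma embG_inj (m n : ℕ) (h : n ≤ m) (h' : n - 1 ≤ m - 1) :
    Function.Injective (embG m n h h') :=
  (Fin.castLE_injective h).sumMap
    ((Fin.castLE_injective h).sumMap (Fin.castLE_injective h'))

lemma embG_adj (m n : ℕ) (h : n ≤ m) (h' : n - 1 ≤ m - 1) (x y : GV n) :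
    (Gm n).Adj x y ↔ (Gm m).Adj (embG m n h h' x) (embG m n h h' y) := by
  rcases x with a | a | a <;> rcases y with b | b | b <;>
    simp [Gm_adj, adjHalf, embG, Fin.ext_iff]

lemma image_embG (m n : ℕ) (h : n ≤ m) (h' : n - 1 ≤ m - 1) :
    Finset.univ.image (embG m n h h') = FS m n n (n - 1) := by
  ext x
  simp only [Finset.mem_image, Finset.mem_univ, true_and]
  constructor
  · rintro ⟨y, rfl⟩
    rcases y with k | k | k <;> simp [embG] <;> exact k.isLt
  · intro hx
    rcases x with i | i | j
    · exact ⟨Sum.inl ⟨i.val, by simpa using hx⟩, by simp [embG, Fin.ext_iff]⟩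
    · exact ⟨Sum.inr (Sum.inl ⟨i.val, by simpa using hx⟩), by simp [embG, Fin.ext_iff]⟩
    · exact ⟨Sum.inr (Sum.inr ⟨j.val, by simpa using hx⟩), by simp [embG, Fin.ext_iff]⟩

lemma PS_FS (m n r : ℕ) (h : n ≤ m) (h' : n - 1 ≤ m - 1) (hr : r = n - 1) :
    PS (Gm m) (FS m n n r) = PS (Gm n) Finset.univ := by
  subst hr
  rw [← image_embG m n h h']
  exact PS_map (Gm m) (Gm n) (embG m n h h') (embG_inj m n h h') (embG_adj m n h h') _

end GmSpecific

section MainRec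

lemma P_rec (m : ℕ) (hm : 3 ≤ m) :
    PS (Gm m) Finset.univ
      = (1 + 2 * X) * PS (Gm (m - 1)) Finset.univ
        + (X + X ^ 2) * PS (Gm (m - 2)) Finset.univ := by
  have hb : m - 1 < m := by omega
  have hc : m - 2 < m - 1 := by omega
  have hb' : m - 2 < m := by omega
  -- the six distinguished vertices
  -- β = b_m, γ = c_m, α = a_m, β' = b_{m-1}
  -- deletion steps
  have d1 := PS_del (Gm m) Finset.univ (Sum.inr (Sum.inl ⟨m - 1, hb⟩)) (Finset.mem_univ _)
  have h1 : (Finset.univ : Finset (GV m)).erase (Sum.inr (Sum.inl ⟨m - 1, hb⟩))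
      = FS m m (m - 1) (m - 1) := by
    ext x
    rcases x with i | i | i <;> have hlt := i.isLt <;>
      simp [Finset.mem_erase, Fin.ext_iff] <;> omega
  have h2 : (FS m m (m - 1) (m - 1)).filter
        (fun u => ¬ (Gm m).Adj (Sum.inr (Sum.inl ⟨m - 1, hb⟩)) u)
      = FS m (m - 1) (m - 1) (m - 2) := by
    ext x
    rcases x with i | i | i <;> have hlt := i.isLt <;>
      simp [Finset.mem_filter, Gm_adj, adjHalf, Fin.ext_iff] <;> omega
  rw [h1, h2] at d1
  have d2 := PS_del (Gm m) (FS m m (m - 1) (m - 1)) (Sum.inr (Sum.inr ⟨m - 2, hc⟩))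
    (by simp; omega)
  have h3 : (FS m m (m - 1) (m - 1)).erase (Sum.inr (Sum.inr ⟨m - 2, hc⟩))
      = FS m m (m - 1) (m - 2) := by
    ext x
    rcases x with i | i | i <;> have hlt := i.isLt <;>
      simp [Finset.mem_erase, Fin.ext_iff] <;> omega
  have h4 : (FS m m (m - 1) (m - 2)).filter
        (fun u => ¬ (Gm m).Adj (Sum.inr (Sum.inr ⟨m - 2, hc⟩)) u)
      = FS m m (m - 2) (m - 2) := by
    ext x
    rcases x with i | i | i <;> have hlt := i.isLt <;>
      simp [Finset.mem_filter, Gm_adj, adjHalf, Fin.ext_iff] <;> omega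
  rw [h3, h4] at d2
  have d3 := PS_del (Gm m) (FS m m (m - 1) (m - 2)) (Sum.inl ⟨m - 1, hb⟩)
    (by simp; omega)
  have h5 : (FS m m (m - 1) (m - 2)).erase (Sum.inl ⟨m - 1, hb⟩)
      = FS m (m - 1) (m - 1) (m - 2) := by
    ext x
    rcases x with i | i | i <;> have hlt := i.isLt <;>
      simp [Finset.mem_erase, Fin.ext_iff] <;> omega
  have h6 : (FS m (m - 1) (m - 1) (m - 2)).filter
        (fun u => ¬ (Gm m).Adj (Sum.inl ⟨m - 1, hb⟩) u)
      = FS m (m - 2) (m - 1) (m - 3) := by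
    ext x
    rcases x with i | i | i <;> have hlt := i.isLt <;>
      simp [Finset.mem_filter, Gm_adj, adjHalf, Fin.ext_iff] <;> omega
  rw [h5, h6] at d3
  have d4 := PS_del (Gm m) (FS m m (m - 2) (m - 2)) (Sum.inl ⟨m - 1, hb⟩)
    (by simp; omega)
  have h7 : (FS m m (m - 2) (m - 2)).erase (Sum.inl ⟨m - 1, hb⟩)
      = FS m (m - 1) (m - 2) (m - 2) := by
    ext x
    rcases x with i | i | i <;> have hlt := i.isLt <;>
      simp [Finset.mem_erase, Fin.ext_iff] <;> omega
  have h8 : (FS m (m - 1) (m - 2) (m - 2)).filter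
        (fun u => ¬ (Gm m).Adj (Sum.inl ⟨m - 1, hb⟩) u)
      = FS m (m - 2) (m - 2) (m - 3) := by
    ext x
    rcases x with i | i | i <;> have hlt := i.isLt <;>
      simp [Finset.mem_filter, Gm_adj, adjHalf, Fin.ext_iff] <;> omega
  rw [h7, h8] at d4
  have d5 := PS_del (Gm m) (FS m (m - 2) (m - 1) (m - 3)) (Sum.inr (Sum.inl ⟨m - 2, hb'⟩))
    (by simp; omega)
  have h9 : (FS m (m - 2) (m - 1) (m - 3)).erase (Sum.inr (Sum.inl ⟨m - 2, hb'⟩))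
      = FS m (m - 2) (m - 2) (m - 3) := by
    ext x
    rcases x with i | i | i <;> have hlt := i.isLt <;>
      simp [Finset.mem_erase, Fin.ext_iff] <;> omega
  have h10 : (FS m (m - 2) (m - 2) (m - 3)).filter
        (fun u => ¬ (Gm m).Adj (Sum.inr (Sum.inl ⟨m - 2, hb'⟩)) u)
      = FS m (m - 2) (m - 2) (m - 3) := by
    ext x
    rcases x with i | i | i <;> have hlt := i.isLt <;>
      simp [Finset.mem_filter, Gm_adj, adjHalf, Fin.ext_iff] <;> omega
  rw [h9, h10] at d5
  have d6 := PS_del (Gm m) (FS m (m - 1) (m - 1) (m - 2)) (Sum.inr (Sum.inl ⟨m - 2, hb'⟩))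
    (by simp; omega)
  have h11 : (FS m (m - 1) (m - 1) (m - 2)).erase (Sum.inr (Sum.inl ⟨m - 2, hb'⟩))
      = FS m (m - 1) (m - 2) (m - 2) := by
    ext x
    rcases x with i | i | i <;> have hlt := i.isLt <;>
      simp [Finset.mem_erase, Fin.ext_iff] <;> omega
  have h12 : (FS m (m - 1) (m - 2) (m - 2)).filter
        (fun u => ¬ (Gm m).Adj (Sum.inr (Sum.inl ⟨m - 2, hb'⟩)) u)
      = FS m (m - 2) (m - 2) (m - 3) := by
    ext x
    rcases x with i | i | i <;> have hlt := i.isLt <;>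
      simp [Finset.mem_filter, Gm_adj, adjHalf, Fin.ext_iff] <;> omega
  rw [h11, h12] at d6
  -- transport to the smaller graphs
  have t1 : PS (Gm m) (FS m (m - 1) (m - 1) (m - 2)) = PS (Gm (m - 1)) Finset.univ :=
    PS_FS m (m - 1) (m - 2) (by omega) (by omega) (by omega)
  have t2 : PS (Gm m) (FS m (m - 2) (m - 2) (m - 3)) = PS (Gm (m - 2)) Finset.univ :=
    PS_FS m (m - 2) (m - 3) (by omega) (by omega) (by omega)
  rw [t1] at d1 d3 d6
  rw [t2] at d4 d5 d6
  linear_combination d1 + d2 + d3 + X * d4 + X * d5 - X * d6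

lemma natDegree_PS_Gm_le (m : ℕ) (hm : 1 ≤ m) : (PS (Gm m) Finset.univ).natDegree ≤ m := by
  induction m using Nat.strong_induction_on with
  | _ m ih =>
    rcases lt_or_ge m 3 with h3 | h3
    · have hcnt : ∀ k, Fintype.card (GV m) < k → (PS (Gm m) Finset.univ).coeff k = 0 := by
        intro k hk
        rw [coeff_PS, cnt_eq_zero _ hk, Nat.cast_zero]
      rw [Polynomial.natDegree_le_iff_coeff_eq_zero]
      intro N hN
      interval_cases m
      · rcases Nat.lt_or_ge 2 N with h | h
        · exact hcnt N (by simp [Fintype.card_sum]; omega)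
        · have : N = 2 := by omega
          subst this
          rw [coeff_PS, show cnt (Gm 1) 2 = 0 from by decide, Nat.cast_zero]
      · rcases Nat.lt_or_ge 5 N with h | h
        · exact hcnt N (by simp [Fintype.card_sum]; omega)
        · rw [coeff_PS]
          interval_cases N <;>
            first
            | rw [show cnt (Gm 2) 3 = 0 from by decide, Nat.cast_zero]
            | rw [show cnt (Gm 2) 4 = 0 from by decide, Nat.cast_zero]
            | rw [show cnt (Gm 2) 5 = 0 from by decide, Nat.cast_zero]
    · rw [P_rec m h3]
      have b1 : ((1 + 2 * X : Polynomial ℤ)).natDegree ≤ 1 := by compute_degree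
      have b2 : ((X + X ^ 2 : Polynomial ℤ)).natDegree ≤ 2 := by compute_degree
      have n1 := ih (m - 1) (by omega) (by omega)
      have n2 := ih (m - 2) (by omega) (by omega)
      have m1 := Polynomial.natDegree_mul_le (p := (1 + 2 * X : Polynomial ℤ))
        (q := PS (Gm (m - 1)) Finset.univ)
      have m2 := Polynomial.natDegree_mul_le (p := (X + X ^ 2 : Polynomial ℤ))
        (q := PS (Gm (m - 2)) Finset.univ)
      have a1 := Polynomial.natDegree_add_le
        ((1 + 2 * X : Polynomial ℤ) * PS (Gm (m - 1)) Finset.univ)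
        ((X + X ^ 2 : Polynomial ℤ) * PS (Gm (m - 2)) Finset.univ)
      exact le_trans a1 (max_le (le_trans m1 (by omega)) (le_trans m2 (by omega)))

lemma comp_finset_sum {ι : Type*} (s : Finset ι) (f : ι → Polynomial ℤ) (q : Polynomial ℤ) :
    (∑ i ∈ s, f i).comp q = ∑ i ∈ s, (f i).comp q := by
  classical
  induction s using Finset.cons_induction with
  | empty => simp
  | cons a s ha ih => rw [Finset.sum_cons, Finset.sum_cons, Polynomial.add_comp, ih]

lemma hNumPoly_eq (m : ℕ) (hm : 1 ≤ m) :
    hNumPoly m = (Polynomial.reflect m (PS (Gm m) Finset.univ)).comp (X - 1) := by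
  rw [reflect_eq_sum m _ (natDegree_PS_Gm_le m hm), comp_finset_sum]
  unfold hNumPoly
  refine Finset.sum_congr rfl fun i _ => ?_
  rw [Polynomial.mul_comp, Polynomial.C_comp, Polynomial.pow_comp, Polynomial.X_comp,
    coeff_PS, ← nIndep_eq_cnt]

end MainRec

section Final

lemma reflect_one_aux : Polynomial.reflect 1 ((1 : Polynomial ℤ) + 2 * X) = X + Polynomial.C 2 := by
  rw [show ((1 : Polynomial ℤ) + 2 * X) = Polynomial.C 1 * X ^ 0 + Polynomial.C 2 * X ^ 1 by
    simp]
  rw [Polynomial.reflect_add, Polynomial.reflect_C_mul_X_pow, Polynomial.reflect_C_mul_X_pow]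
  rw [Polynomial.revAt_le (by omega), Polynomial.revAt_le (by omega)]
  simp

lemma reflect_two_aux : Polynomial.reflect 2 ((X : Polynomial ℤ) + X ^ 2) = X + 1 := by
  rw [show ((X : Polynomial ℤ) + X ^ 2) = Polynomial.C 1 * X ^ 1 + Polynomial.C 1 * X ^ 2 by
    simp]
  rw [Polynomial.reflect_add, Polynomial.reflect_C_mul_X_pow, Polynomial.reflect_C_mul_X_pow]
  rw [Polynomial.revAt_le (by omega), Polynomial.revAt_le (by omega)]
  simp

/-- For every `m ≥ 3`, `h(m, t) = (t + 1)·h(m−1, t) + t·h(m−2, t)`. -/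
theorem hNumPoly_recursion (m : ℕ) (hm : 3 ≤ m) :
    hNumPoly m = (Polynomial.X + 1) * hNumPoly (m - 1) + Polynomial.X * hNumPoly (m - 2) := by
  have b1 : ((1 + 2 * X : Polynomial ℤ)).natDegree ≤ 1 := by compute_degree
  have b2 : ((X + X ^ 2 : Polynomial ℤ)).natDegree ≤ 2 := by compute_degree
  have n1 := natDegree_PS_Gm_le (m - 1) (by omega)
  have n2 := natDegree_PS_Gm_le (m - 2) (by omega)
  have e1 := Polynomial.reflect_mul (1 + 2 * X) (PS (Gm (m - 1)) Finset.univ)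
    (F := 1) (G := m - 1) b1 n1
  have e2 := Polynomial.reflect_mul (X + X ^ 2) (PS (Gm (m - 2)) Finset.univ)
    (F := 2) (G := m - 2) b2 n2
  rw [show 1 + (m - 1) = m from by omega] at e1
  rw [show 2 + (m - 2) = m from by omega] at e2
  rw [hNumPoly_eq m (by omega), hNumPoly_eq (m - 1) (by omega), hNumPoly_eq (m - 2) (by omega)]
  rw [P_rec m hm, Polynomial.reflect_add, e1, e2, reflect_one_aux, reflect_two_aux]
  simp only [Polynomial.add_comp, Polynomial.mul_comp, Polynomial.C_comp, Polynomial.X_comp,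
    Polynomial.one_comp, map_ofNat, Polynomial.ofNat_comp]
  ring

end Final
end

section
/- For every m ≥ 1, every maximal independent set of G_m has cardinality exactly m; in particular, the independence number of G_m is m and G_m is well-covered. -/
-- adjacency lemmas
variable {m : ℕ}

lemma adj_iff (u v : GV m) : (Gm m).Adj u v ↔ (adjHalf m u v = true ∨ adjHalf m v u = true) := Iff.rfl

lemma adj_aa (i i' : Fin m) : (Gm m).Adj (aV i) (aV i') ↔ ((i:ℕ)+1 = i' ∨ (i':ℕ)+1 = i) := by
  rw [adj_iff]; simp [adjHalf, aV]

lemma adj_ab (i i' : Fin m) : (Gm m).Adj (aV i) (bV i') ↔ i = i' := by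
  rw [adj_iff]; simp [adjHalf, aV, bV]

lemma adj_ac (i : Fin m) (j : Fin (m-1)) : (Gm m).Adj (aV i) (cV j) ↔ (i:ℕ) = (j:ℕ) + 2 := by
  rw [adj_iff]; simp [adjHalf, aV, cV]

lemma adj_bc (i : Fin m) (j : Fin (m-1)) : (Gm m).Adj (bV i) (cV j) ↔ ((i:ℕ) = j ∨ (i:ℕ) = (j:ℕ)+1) := by
  rw [adj_iff]; simp [adjHalf, bV, cV]

lemma adj_bb (i i' : Fin m) : ¬ (Gm m).Adj (bV i) (bV i') := by
  rw [adj_iff]; simp [adjHalf, bV]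

lemma adj_cc (j j' : Fin (m-1)) : ¬ (Gm m).Adj (cV j) (cV j') := by
  rw [adj_iff]; simp [adjHalf, cV]
variable {m : ℕ}

def Ain (S : Finset (GV m)) (i : ℕ) : Prop := ∃ x : Fin m, (x:ℕ) = i ∧ aV x ∈ S
def Bin (S : Finset (GV m)) (i : ℕ) : Prop := ∃ x : Fin m, (x:ℕ) = i ∧ bV x ∈ S
def Cin (S : Finset (GV m)) (i : ℕ) : Prop := ∃ j : Fin (m-1), (j:ℕ) + 1 = i ∧ cV j ∈ S

instance (S : Finset (GV m)) (i : ℕ) : Decidable (Ain S i) := by unfold Ain; infer_instance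
instance (S : Finset (GV m)) (i : ℕ) : Decidable (Bin S i) := by unfold Bin; infer_instance
instance (S : Finset (GV m)) (i : ℕ) : Decidable (Cin S i) := by unfold Cin; infer_instance

def gfun (S : Finset (GV m)) (i : ℕ) : ℕ :=
  (if Ain S i then 1 else 0) + ((if Bin S i then 1 else 0) + (if Cin S i then 1 else 0))

variable (S : Finset (GV m))

lemma Ain_iff (i : Fin m) : Ain S i.val ↔ aV i ∈ S := by
  constructor
  · rintro ⟨x, hx, hmem⟩; rwa [show x = i from Fin.ext hx] at hmem
  · exact fun hx => ⟨i, rfl, hx⟩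

lemma Bin_iff (i : Fin m) : Bin S i.val ↔ bV i ∈ S := by
  constructor
  · rintro ⟨x, hx, hmem⟩; rwa [show x = i from Fin.ext hx] at hmem
  · exact fun hx => ⟨i, rfl, hx⟩

lemma Cin_iff (j : Fin (m-1)) : Cin S ((j:ℕ)+1) ↔ cV j ∈ S := by
  constructor
  · rintro ⟨j', hj', hx⟩
    rwa [show j' = j from Fin.ext (by omega)] at hx
  · exact fun hx => ⟨j, rfl, hx⟩

lemma card_eq_sum (hm : 1 ≤ m) : S.card = ∑ i ∈ Finset.range m, gfun S i := by
  obtain ⟨n, rfl⟩ : ∃ n, m = n + 1 := ⟨m - 1, by omega⟩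
  have hL : S.toLeft = Finset.univ.filter (fun i : Fin (n+1) => aV i ∈ S) := by
    ext a; rw [Finset.mem_filter]; simp [aV, Finset.mem_toLeft]
  have hRL : S.toRight.toLeft = Finset.univ.filter (fun i : Fin (n+1) => bV i ∈ S) := by
    ext a; rw [Finset.mem_filter]; simp [bV, Finset.mem_toLeft, Finset.mem_toRight]
  have hRR : S.toRight.toRight = Finset.univ.filter (fun j : Fin n => cV (m := n+1) j ∈ S) := by
    ext a; rw [Finset.mem_filter]; simp [cV, Finset.mem_toRight]
  have h1 : S.card = S.toLeft.card + (S.toRight.toLeft.card + S.toRight.toRight.card) := by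
    rw [Finset.card_toLeft_add_card_toRight, Finset.card_toLeft_add_card_toRight]
  have hA : S.toLeft.card = ∑ i ∈ Finset.range (n+1), (if Ain S i then 1 else 0) := by
    rw [hL, Finset.card_filter, ← Fin.sum_univ_eq_sum_range]
    exact Finset.sum_congr rfl fun i _ => by
      by_cases h : aV i ∈ S <;> simp [h, (Ain_iff S i)]
  have hB : S.toRight.toLeft.card = ∑ i ∈ Finset.range (n+1), (if Bin S i then 1 else 0) := by
    rw [hRL, Finset.card_filter, ← Fin.sum_univ_eq_sum_range]
    exact Finset.sum_congr rfl fun i _ => by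
      by_cases h : bV i ∈ S <;> simp [h, (Bin_iff S i)]
  have hC : S.toRight.toRight.card = ∑ i ∈ Finset.range (n+1), (if Cin S i then 1 else 0) := by
    have e1 : S.toRight.toRight.card = ∑ j : Fin n, (if cV (m := n+1) j ∈ S then 1 else 0) := by
      rw [hRR]; exact Finset.card_filter _ _
    have h0 : (if Cin S 0 then (1:ℕ) else 0) = 0 := by
      simp only [ite_eq_right_iff]
      rintro ⟨j, hj, -⟩; omega
    rw [e1, Finset.sum_range_succ', h0, add_zero, ← Fin.sum_univ_eq_sum_range]
    exact Finset.sum_congr rfl fun j _ => by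
      by_cases h : cV (m := n+1) j ∈ S <;> simp [h, (Cin_iff S j)]
  rw [h1, hA, hB, hC, ← Finset.sum_add_distrib, ← Finset.sum_add_distrib]
  rfl

section structural
variable (S : Finset (GV m))

lemma not_AB (hind : ∀ u ∈ S, ∀ v ∈ S, ¬ (Gm m).Adj u v) (i : ℕ) : ¬(Ain S i ∧ Bin S i) := by
  rintro ⟨⟨x, hx, ha⟩, ⟨y, hy, hb⟩⟩
  exact hind _ ha _ hb ((adj_ab x y).2 (Fin.ext (by omega)))

lemma not_BC (hind : ∀ u ∈ S, ∀ v ∈ S, ¬ (Gm m).Adj u v) (i : ℕ) : ¬(Bin S i ∧ Cin S i) := by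
  rintro ⟨⟨x, hx, hb⟩, ⟨j, hj, hc⟩⟩
  exact hind _ hb _ hc ((adj_bc x j).2 (Or.inr (by omega)))

lemma double_prev (hind : ∀ u ∈ S, ∀ v ∈ S, ¬ (Gm m).Adj u v) (i : ℕ) (hA : Ain S i) (hC : Cin S i) :
    ¬Ain S (i-1) ∧ ¬Bin S (i-1) ∧ ¬Cin S (i-1) := by
  obtain ⟨x, hx, ha⟩ := hA
  obtain ⟨j, hj, hc⟩ := hC
  refine ⟨?_, ?_, ?_⟩
  · rintro ⟨y, hy, ha'⟩
    exact hind _ ha' _ ha ((adj_aa y x).2 (Or.inl (by omega)))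
  · rintro ⟨y, hy, hb'⟩
    exact hind _ hb' _ hc ((adj_bc y j).2 (Or.inl (by omega)))
  · rintro ⟨j', hj', hc'⟩
    exact hind _ ha _ hc' ((adj_ac x j').2 (by omega))

lemma empty_next (hind : ∀ u ∈ S, ∀ v ∈ S, ¬ (Gm m).Adj u v) (hmax : ∀ v, v ∉ S → ∃ u ∈ S, (Gm m).Adj u v) (i : ℕ) (hi : i < m)
    (hA : ¬ Ain S i) (hB : ¬ Bin S i) (hC : ¬ Cin S i) : Ain S (i+1) ∧ Cin S (i+1) := by
  have hbnot : bV ⟨i, hi⟩ ∉ S := fun h => hB ⟨⟨i, hi⟩, rfl, h⟩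
  obtain ⟨u, hu, hadj⟩ := hmax _ hbnot
  obtain ⟨j, hji, hcmem⟩ : ∃ j : Fin (m-1), (j:ℕ) = i ∧ cV j ∈ S := by
    rcases u with x | x | j
    · exact absurd ⟨x, congrArg Fin.val ((adj_ab x ⟨i, hi⟩).1 hadj), hu⟩ hA
    · exact absurd hadj (adj_bb x ⟨i, hi⟩)
    · rcases (adj_bc ⟨i, hi⟩ j).1 hadj.symm with h2 | h2
      · exact ⟨j, h2.symm, hu⟩
      · exact absurd ⟨j, h2.symm, hu⟩ hC
  have hjm : (j:ℕ) < m - 1 := j.2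
  have hi1 : i + 1 < m := by omega
  refine ⟨?_, ⟨j, by omega, hcmem⟩⟩
  by_contra hAn
  have hanot : aV ⟨i+1, hi1⟩ ∉ S := fun h => hAn ⟨⟨i+1, hi1⟩, rfl, h⟩
  obtain ⟨u, hu2, hadj2⟩ := hmax _ hanot
  rcases u with x | x | j'
  · rcases (adj_aa x ⟨i+1, hi1⟩).1 hadj2 with h2 | h2
    · exact hA ⟨x, by simpa using h2, hu2⟩
    · exact hind _ hu2 _ hcmem ((adj_ac x j).2 (by simp at h2; omega))
  · have h2 := congrArg Fin.val ((adj_ab ⟨i+1, hi1⟩ x).1 hadj2.symm)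
    exact hind _ hu2 _ hcmem ((adj_bc x j).2 (Or.inr (by simp at h2; omega)))
  · have h2 := (adj_ac ⟨i+1, hi1⟩ j').1 hadj2.symm
    exact hC ⟨j', by simp at h2; omega, hu2⟩

lemma g_eq_zero_iff (i : ℕ) : gfun S i = 0 ↔ ¬Ain S i ∧ ¬Bin S i ∧ ¬Cin S i := by
  by_cases hA : Ain S i <;> by_cases hB : Bin S i <;> by_cases hC : Cin S i <;>
    simp [gfun, hA, hB, hC]

lemma g_le_two (hind : ∀ u ∈ S, ∀ v ∈ S, ¬ (Gm m).Adj u v) (i : ℕ) : gfun S i ≤ 2 := by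
  by_cases hA : Ain S i <;> by_cases hB : Bin S i <;> by_cases hC : Cin S i <;>
    simp [gfun, hA, hB, hC] <;>
    first
      | exact absurd ⟨hA, hB⟩ (not_AB S hind i)
      | exact absurd ⟨hB, hC⟩ (not_BC S hind i)
      | tauto

lemma g_eq_two_of (hind : ∀ u ∈ S, ∀ v ∈ S, ¬ (Gm m).Adj u v) (i : ℕ) (hA : Ain S i) (hC : Cin S i) : gfun S i = 2 := by
  have hB : ¬ Bin S i := fun hb => not_BC S hind i ⟨hb, hC⟩
  simp [gfun, hA, hB, hC]

lemma g_eq_two_iff (hind : ∀ u ∈ S, ∀ v ∈ S, ¬ (Gm m).Adj u v) (i : ℕ) : gfun S i = 2 ↔ Ain S i ∧ Cin S i := by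
  have hab := not_AB S hind i
  have hbc := not_BC S hind i
  by_cases hA : Ain S i <;> by_cases hB : Bin S i <;> by_cases hC : Cin S i <;>
    simp [gfun, hA, hB, hC] <;> tauto

lemma card_of_max (hind : ∀ u ∈ S, ∀ v ∈ S, ¬ (Gm m).Adj u v) (hm : 1 ≤ m)
    (hmax : ∀ v, v ∉ S → ∃ u ∈ S, (Gm m).Adj u v) : S.card = m := by
  rw [card_eq_sum S hm]
  set E := (Finset.range m).filter (fun i => gfun S i = 0) with hE
  set D := (Finset.range m).filter (fun i => gfun S i = 2) with hD
  have hED : E.card = D.card := by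
    apply Finset.card_bij (fun a _ => a + 1)
    · intro a ha
      rw [hE, Finset.mem_filter, Finset.mem_range] at ha
      obtain ⟨ham, hg0⟩ := ha
      obtain ⟨hnA, hnB, hnC⟩ := (g_eq_zero_iff S a).1 hg0
      obtain ⟨hA1, hC1⟩ := empty_next S hind hmax a ham hnA hnB hnC
      have h1m : a + 1 < m := by
        obtain ⟨j, hj, -⟩ := hC1
        have := j.2
        omega
      rw [hD, Finset.mem_filter, Finset.mem_range]
      exact ⟨h1m, g_eq_two_of S hind _ hA1 hC1⟩
    · intro a _ b _ h; omega
    · intro b hb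
      rw [hD, Finset.mem_filter, Finset.mem_range] at hb
      obtain ⟨hbm, hg2⟩ := hb
      obtain ⟨hA, hC⟩ := (g_eq_two_iff S hind b).1 hg2
      have hb1 : 1 ≤ b := by obtain ⟨j, hj, -⟩ := hC; omega
      obtain ⟨hnA, hnB, hnC⟩ := double_prev S hind b hA hC
      refine ⟨b - 1, ?_, by omega⟩
      rw [hE, Finset.mem_filter, Finset.mem_range]
      exact ⟨by omega, (g_eq_zero_iff S (b-1)).2 ⟨hnA, hnB, hnC⟩⟩
  have key : ∀ i ∈ Finset.range m,
      gfun S i + (if gfun S i = 0 then 1 else 0) = 1 + (if gfun S i = 2 then 1 else 0) := by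
    intro i _
    have h2 := g_le_two S hind i
    by_cases h0 : gfun S i = 0 <;> by_cases h2' : gfun S i = 2 <;> simp [h0, h2'] <;> omega
  have hsum := Finset.sum_congr rfl key
  rw [Finset.sum_add_distrib, Finset.sum_add_distrib, ← Finset.card_filter,
    ← Finset.card_filter, Finset.sum_const, Finset.card_range, smul_eq_mul, mul_one,
    ← hE, ← hD] at hsum
  omega

end structural

lemma exists_max_ext (s : Finset (GV m)) (hs : ∀ u ∈ s, ∀ v ∈ s, ¬ (Gm m).Adj u v) :
    ∃ B : Finset (GV m), s ⊆ B ∧ (∀ u ∈ B, ∀ v ∈ B, ¬ (Gm m).Adj u v) ∧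
      ∀ v, v ∉ B → ∃ u ∈ B, (Gm m).Adj u v := by
  classical
  set F := (Finset.univ : Finset (Finset (GV m))).filter
    (fun B => s ⊆ B ∧ ∀ u ∈ B, ∀ v ∈ B, ¬ (Gm m).Adj u v) with hF
  have hsF : s ∈ F := by
    rw [hF, Finset.mem_filter]
    exact ⟨Finset.mem_univ _, Finset.Subset.refl _, hs⟩
  obtain ⟨B, hBF, hBmax⟩ := F.exists_max_image Finset.card ⟨s, hsF⟩
  rw [hF, Finset.mem_filter] at hBF
  refine ⟨B, hBF.2.1, hBF.2.2, ?_⟩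
  intro v hv
  by_contra hno
  push_neg at hno
  have hins : insert v B ∈ F := by
    rw [hF, Finset.mem_filter]
    refine ⟨Finset.mem_univ _, hBF.2.1.trans (Finset.subset_insert _ _), ?_⟩
    intro u hu w hw
    rcases Finset.mem_insert.1 hu with h1 | h1 <;> rcases Finset.mem_insert.1 hw with h2 | h2
    · intro hadj; rw [h1, h2] at hadj; exact (Gm m).loopless.irrefl _ hadj
    · intro hadj; rw [h1] at hadj; exact hno w h2 hadj.symm
    · intro hadj; rw [h2] at hadj; exact hno u h1 hadj
    · exact hBF.2.2 u h1 w h2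
  have h1 := hBmax _ hins
  have hlt : B.card < (insert v B).card := Finset.card_lt_card (Finset.ssubset_insert hv)
  omega


/-- The independence number of a graph: the maximum cardinality of an independent set. -/
noncomputable def indepNum {V : Type*} (G : SimpleGraph V) : ℕ :=
  sSup {k | ∃ s : Finset V, s.card = k ∧ ∀ u ∈ s, ∀ v ∈ s, ¬ G.Adj u v}

/-- For every `m ≥ 1`, every maximal independent set of `Gₘ` has cardinality exactly `m`;
in particular `α(Gₘ) = m` (and `Gₘ` is well-covered). -/
theorem Gm_well_covered (m : ℕ) (hm : 1 ≤ m) :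
    (∀ A : Finset (GV m),
      (∀ u ∈ A, ∀ v ∈ A, ¬ (Gm m).Adj u v) →
      (∀ B : Finset (GV m), (∀ u ∈ B, ∀ v ∈ B, ¬ (Gm m).Adj u v) → A ⊆ B → A = B) →
      A.card = m) ∧
    indepNum (Gm m) = m := by
  have part1 : ∀ A : Finset (GV m),
      (∀ u ∈ A, ∀ v ∈ A, ¬ (Gm m).Adj u v) →
      (∀ B : Finset (GV m), (∀ u ∈ B, ∀ v ∈ B, ¬ (Gm m).Adj u v) → A ⊆ B → A = B) →
      A.card = m := by
    intro A hind hmaxB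
    apply card_of_max A hind hm
    intro v hv
    by_contra hno
    push_neg at hno
    have hins_ind : ∀ u ∈ insert v A, ∀ w ∈ insert v A, ¬ (Gm m).Adj u w := by
      intro u hu w hw
      rcases Finset.mem_insert.1 hu with h1 | h1 <;> rcases Finset.mem_insert.1 hw with h2 | h2
      · intro hadj; rw [h1, h2] at hadj; exact (Gm m).loopless.irrefl _ hadj
      · intro hadj; rw [h1] at hadj; exact hno w h2 hadj.symm
      · intro hadj; rw [h2] at hadj; exact hno u h1 hadj
      · exact hind u h1 w h2
    have h1 := hmaxB _ hins_ind (Finset.subset_insert _ _)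
    exact hv (h1 ▸ Finset.mem_insert_self v A)
  refine ⟨part1, ?_⟩
  obtain ⟨B, -, hBind, hBmax⟩ := exists_max_ext (∅ : Finset (GV m)) (by simp)
  have hBcard : B.card = m := card_of_max B hBind hm hBmax
  have hub : ∀ k ∈ {k | ∃ s : Finset (GV m), s.card = k ∧ ∀ u ∈ s, ∀ v ∈ s, ¬ (Gm m).Adj u v},
      k ≤ m := by
    rintro k ⟨s, rfl, hsind⟩
    obtain ⟨B', hsB', hB'ind, hB'max⟩ := exists_max_ext s hsind
    have hB' : B'.card = m := card_of_max B' hB'ind hm hB'max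
    exact le_trans (Finset.card_le_card hsB') (le_of_eq hB')
  have hmem : m ∈ {k | ∃ s : Finset (GV m), s.card = k ∧ ∀ u ∈ s, ∀ v ∈ s, ¬ (Gm m).Adj u v} :=
    ⟨B, hBcard, hBind⟩
  rw [indepNum]
  exact le_antisymm (csSup_le ⟨m, hmem⟩ hub) (le_csSup ⟨m, hub⟩ hmem)
end
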